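/- arXiv:2510.05937 — 4 statements merged into one kernel-verified Lean document; each statement's English description precedes it below -/
import Mathlib

section
/- Let (X, d) be a metric space, let S = S₁ ∪ S₂ be a finite subset of X with S₁ and S₂ disjoint, let k₁, k₂ be natural numbers with k = k₁ + k₂, let r* ≥ 0, and suppose there exists C* ⊆ S with |C* ∩ S₁| ≤ k₁, |C* ∩ S₂| ≤ k₂, and d(s, C*) ≤ r* for every s ∈ S. Fix l ∈ {1, 2} and let l' denote the other index. Let Γ_l ⊆ S_l be a 2r*-independent center set of S_l, let Γ_{l'} ⊆ S_{l'} be a 2r*-independent center set of S_{l'} with |Γ_{l'}| ≤ k_{l'}, let Γ_l' = { i ∈ Γ_l : d(i, Γ_{l'}) > 3·r* }, and let C = Γ_l' ∪ Γ_{l'}. Then: (1) |Γ_l'| ≤ k_l, |Γ_{l'}| ≤ k_{l'}, and |C| ≤ k; and (2) every s ∈ S satisfies d(s, C) ≤ 5·r*. -/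
/-!
Every point of `Γ_l` that is more than `3r*` away from `Γ_{l'}` has its optimal center inside `S_l`:
an optimal center in `S_{l'}` would lie within `2r*` of `Γ_{l'}`. Distinct points of `Γ_l` are more than
`2r*` apart, so they use distinct optimal centers, whence `|Γ_l'| ≤ |C* ∩ S_l| ≤ k_l`. For the radius, a point
of `S_l` is within `2r*` of some `p ∈ Γ_l`; either `p ∈ Γ_l'`, or `p` is within `3r*` of `Γ_{l'}`.
-/

section

variable {X : Type*} [MetricSpace X]

theorem card_le_card_of_separated_of_forall_near {A B : Finset X} {r : ℝ}
    (hsep : ∀ p ∈ A, ∀ q ∈ A, p ≠ q → 2 * r < dist p q)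
    (hnear : ∀ p ∈ A, ∃ c ∈ B, dist p c ≤ r) :
    A.card ≤ B.card :=
  Finset.card_le_card_of_forall_subsingleton (fun p c => dist p c ≤ r) hnear
    fun c _ p hp q hq => by
      by_contra hne
      simp only [Set.mem_ofPred_eq] at hp hq
      linarith [hsep p hp.1 q hq.1 hne, dist_triangle_right p q c]

variable [DecidableEq X] {T T' Γ Γ' : Finset X} {r : ℝ}

theorem exists_mem_inter_dist_le_of_far {C : Finset X} (hCsub : C ⊆ T ∪ T')
    (hCcover : ∀ s ∈ T ∪ T', ∃ c ∈ C, dist s c ≤ r)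
    (hΓ' : ∀ p ∈ T', ∃ q ∈ Γ', dist p q ≤ 2 * r)
    {x : X} (hx : x ∈ T) (hfar : ∀ q ∈ Γ', 3 * r < dist x q) :
    ∃ c ∈ C ∩ T, dist x c ≤ r := by
  obtain ⟨c, hc, hxc⟩ := hCcover x (Finset.mem_union_left _ hx)
  rcases Finset.mem_union.1 (hCsub hc) with hcT | hcT'
  · exact ⟨c, Finset.mem_inter.2 ⟨hc, hcT⟩, hxc⟩
  · obtain ⟨q, hq, hcq⟩ := hΓ' c hcT'
    linarith [hfar q hq, dist_triangle x c q]

theorem exists_mem_union_dist_le_five_mul {D : Finset X} (hr : 0 ≤ r)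
    (hΓ : ∀ p ∈ T, ∃ q ∈ Γ, dist p q ≤ 2 * r)
    (hΓ' : ∀ p ∈ T', ∃ q ∈ Γ', dist p q ≤ 2 * r)
    (hD : ∀ x, x ∈ D ↔ x ∈ Γ ∧ ∀ q ∈ Γ', 3 * r < dist x q) :
    ∀ s ∈ T ∪ T', ∃ c ∈ D ∪ Γ', dist s c ≤ 5 * r := by
  intro s hs
  rcases Finset.mem_union.1 hs with hsT | hsT'
  · obtain ⟨p, hp, hsp⟩ := hΓ s hsT
    by_cases hpD : p ∈ D
    · exact ⟨p, Finset.mem_union_left _ hpD, by linarith⟩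
    · obtain ⟨q, hq, hpq⟩ : ∃ q ∈ Γ', dist p q ≤ 3 * r := by
        simpa [hD, hp] using hpD
      exact ⟨q, Finset.mem_union_right _ hq, by linarith [dist_triangle s p q]⟩
  · obtain ⟨q, hq, hsq⟩ := hΓ' s hsT'
    exact ⟨q, Finset.mem_union_right _ hq, by linarith⟩

end

/-- The two groups are indexed by `Fin 2`; `l' = l + 1` is the other index. -/
theorem case_two_correctness_general
    {X : Type*} [MetricSpace X] [DecidableEq X]
    (S Γ : Fin 2 → Finset X) (k : Fin 2 → ℕ) (rstar : ℝ)
    (Cstar : Finset X) (l : Fin 2) (Γl' : Finset X)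
    (hr : 0 ≤ rstar)
    (hCsub : Cstar ⊆ S 0 ∪ S 1)
    (hCfair : ∀ i : Fin 2, (Cstar ∩ S i).card ≤ k i)
    (hCcover : ∀ s ∈ S 0 ∪ S 1, ∃ c ∈ Cstar, dist s c ≤ rstar)
    -- `Γ i` is a `2r*`-independent center set of `S i`, for each `i`
    (hΓsub : ∀ i : Fin 2, Γ i ⊆ S i)
    (hΓsep : ∀ i : Fin 2, ∀ p ∈ Γ i, ∀ q ∈ Γ i, p ≠ q → 2 * rstar < dist p q)
    (hΓcover : ∀ i : Fin 2, ∀ p ∈ S i, ∃ q ∈ Γ i, dist p q ≤ 2 * rstar)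
    -- the other group's set is small enough: `|Γ_{l'}| ≤ k_{l'}`
    (hother : (Γ (l + 1)).card ≤ k (l + 1))
    -- `Γ_l' = { i ∈ Γ_l : d(i, Γ_{l'}) > 3r* }`
    (hΓl' : ∀ x : X, x ∈ Γl' ↔ x ∈ Γ l ∧ ∀ q ∈ Γ (l + 1), 3 * rstar < dist x q) :
    Γl'.card ≤ k l ∧ (Γ (l + 1)).card ≤ k (l + 1) ∧
      (Γl' ∪ Γ (l + 1)).card ≤ k 0 + k 1 ∧
      ∀ s ∈ S 0 ∪ S 1, ∃ c ∈ Γl' ∪ Γ (l + 1), dist s c ≤ 5 * rstar := by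
  have hS : S 0 ∪ S 1 = S l ∪ S (l + 1) := by
    fin_cases l <;> simp [Finset.union_comm]
  have hk : k l + k (l + 1) = k 0 + k 1 := by
    fin_cases l <;> simp [add_comm]
  rw [hS] at hCsub hCcover ⊢
  have hfair : Γl'.card ≤ k l :=
    (card_le_card_of_separated_of_forall_near
      (fun p hp q hq => hΓsep l p ((hΓl' p).1 hp).1 q ((hΓl' q).1 hq).1)
      fun x hx => exists_mem_inter_dist_le_of_far hCsub hCcover (hΓcover _)
        (hΓsub l ((hΓl' x).1 hx).1) ((hΓl' x).1 hx).2).trans (hCfair l)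
  refine ⟨hfair, hother, ?_, exists_mem_union_dist_le_five_mul hr (hΓcover l) (hΓcover _) hΓl'⟩
  calc (Γl' ∪ Γ (l + 1)).card ≤ Γl'.card + (Γ (l + 1)).card := Finset.card_union_le _ _
    _ ≤ k l + k (l + 1) := add_le_add hfair hother
    _ = k 0 + k 1 := hk

/-- Theorem 1 (correctness of the procession of Case (2)).
The two groups are indexed by `Fin 2`; `l' = l + 1` is the other index. -/
theorem case_two_correctness
    {X : Type*} [MetricSpace X] [DecidableEq X]
    (S Γ : Fin 2 → Finset X) (k : Fin 2 → ℕ) (rstar : ℝ)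
    (Cstar : Finset X) (l : Fin 2) (Γl' : Finset X)
    (hr : 0 ≤ rstar)
    (hdisj : Disjoint (S 0) (S 1))
    (hCsub : Cstar ⊆ S 0 ∪ S 1)
    (hCfair : ∀ i : Fin 2, (Cstar ∩ S i).card ≤ k i)
    (hCcover : ∀ s ∈ S 0 ∪ S 1, ∃ c ∈ Cstar, dist s c ≤ rstar)
    -- `Γ i` is a `2r*`-independent center set of `S i`, for each `i`
    (hΓsub : ∀ i : Fin 2, Γ i ⊆ S i)
    (hΓsep : ∀ i : Fin 2, ∀ p ∈ Γ i, ∀ q ∈ Γ i, p ≠ q → 2 * rstar < dist p q)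
    (hΓcover : ∀ i : Fin 2, ∀ p ∈ S i, ∃ q ∈ Γ i, dist p q ≤ 2 * rstar)
    -- the other group's set is small enough: `|Γ_{l'}| ≤ k_{l'}`
    (hother : (Γ (l + 1)).card ≤ k (l + 1))
    -- `Γ_l' = { i ∈ Γ_l : d(i, Γ_{l'}) > 3r* }`
    (hΓl' : ∀ x : X, x ∈ Γl' ↔ x ∈ Γ l ∧ ∀ q ∈ Γ (l + 1), 3 * rstar < dist x q) :
    Γl'.card ≤ k l ∧ (Γ (l + 1)).card ≤ k (l + 1) ∧
      (Γl' ∪ Γ (l + 1)).card ≤ k 0 + k 1 ∧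
      ∀ s ∈ S 0 ∪ S 1, ∃ c ∈ Γl' ∪ Γ (l + 1), dist s c ≤ 5 * rstar :=
  case_two_correctness_general S Γ k rstar Cstar l Γl' hr hCsub hCfair hCcover hΓsub hΓsep hΓcover
    hother hΓl'
end

section
/- Let (X, d) be a metric space, let S = S₁ ∪ S₂ be a finite subset of X with S₁ and S₂ disjoint, let k₂ ∈ ℕ, let r* ≥ 0, and suppose there exists C* ⊆ S with |C* ∩ S₂| ≤ k₂ and d(s, C*) ≤ r* for every s ∈ S. Let Γ₁ ⊆ S₁ be such that every point s ∈ S₁ satisfies d(s, Γ₁) ≤ 2·r*, and let Γ₂ ⊆ S₂ be a set in which any two distinct points are at distance greater than 2·r* and such that every q ∈ Γ₂ satisfies d(q, Γ₁) > 3·r*. Then |Γ₂| ≤ k₂. -/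
/-! Each point of `Γ₂` has an optimal center within `r*`. Such a center cannot lie in `S₁`: it
would be within `2r*` of `Γ₁`, putting the point within `3r*` of `Γ₁`. Two distinct points of
`Γ₂` cannot share a center, since they are more than `2r*` apart. So the points of `Γ₂` are
injectively assigned to centers in `C* ∩ S₂`. -/

namespace Finset

variable {X : Type*} [PseudoMetricSpace X]

theorem card_le_card_of_forall_exists_dist_le {s t : Finset X} {r : ℝ}
    (hcover : ∀ p ∈ s, ∃ c ∈ t, dist p c ≤ r)
    (hsep : ∀ p ∈ s, ∀ q ∈ s, p ≠ q → 2 * r < dist p q) :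
    s.card ≤ t.card := by
  refine card_le_card_of_forall_subsingleton (fun p c => dist p c ≤ r) hcover ?_
  rintro c - p ⟨hp, hpc⟩ q ⟨hq, hqc⟩
  by_contra hne
  have : dist p q ≤ 2 * r := by
    linarith [dist_triangle_right p q c]
  linarith [hsep p hp q hq hne]

theorem notMem_of_dist_le_of_forall_lt_dist {S Γ : Finset X} {r : ℝ} {q c : X}
    (hcover : ∀ s ∈ S, ∃ g ∈ Γ, dist s g ≤ 2 * r)
    (hfar : ∀ g ∈ Γ, 3 * r < dist q g) (hqc : dist q c ≤ r) :
    c ∉ S := by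
  intro hc
  obtain ⟨g, hg, hcg⟩ := hcover c hc
  linarith [hfar g hg, dist_triangle q c g]

end Finset

theorem semi_structured_gamma2_size_general
    {X : Type*} [MetricSpace X] [DecidableEq X]
    (S₁ S₂ Γ₁ Γ₂ Cstar : Finset X) (k₂ : ℕ) (rstar : ℝ)
    (hCsub : Cstar ⊆ S₁ ∪ S₂)
    (hCfair₂ : (Cstar ∩ S₂).card ≤ k₂)
    (hCcover : ∀ s ∈ S₁ ∪ S₂, ∃ c ∈ Cstar, dist s c ≤ rstar)
    (hΓ₁cover : ∀ s ∈ S₁, ∃ q ∈ Γ₁, dist s q ≤ 2 * rstar)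
    (hΓ₂sub : Γ₂ ⊆ S₂)
    (hΓ₂sep : ∀ p ∈ Γ₂, ∀ q ∈ Γ₂, p ≠ q → 2 * rstar < dist p q)
    (hΓ₂far : ∀ q ∈ Γ₂, ∀ g ∈ Γ₁, 3 * rstar < dist q g) :
    Γ₂.card ≤ k₂ := by
  have hcover₂ : ∀ q ∈ Γ₂, ∃ c ∈ Cstar ∩ S₂, dist q c ≤ rstar := by
    intro q hq
    obtain ⟨c, hc, hqc⟩ := hCcover q (Finset.mem_union_right _ (hΓ₂sub hq))
    have hcS₁ : c ∉ S₁ :=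
      Finset.notMem_of_dist_le_of_forall_lt_dist hΓ₁cover (hΓ₂far q hq) hqc
    have hcS₂ : c ∈ S₂ := (Finset.mem_union.1 (hCsub hc)).resolve_left hcS₁
    exact ⟨c, Finset.mem_inter.2 ⟨hc, hcS₂⟩, hqc⟩
  exact (Finset.card_le_card_of_forall_exists_dist_le hcover₂ hΓ₂sep).trans hCfair₂

/-- Condition (2) of Lemma 5: every point of `Γ₂` lies in an optimal cluster
centered at a point of `S₂`, hence `|Γ₂| ≤ k₂`. -/
theorem semi_structured_gamma2_size
    {X : Type*} [MetricSpace X] [DecidableEq X]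
    (S₁ S₂ Γ₁ Γ₂ Cstar : Finset X) (k₂ : ℕ) (rstar : ℝ)
    (hr : 0 ≤ rstar)
    (hdisj : Disjoint S₁ S₂)
    (hCsub : Cstar ⊆ S₁ ∪ S₂)
    (hCfair₂ : (Cstar ∩ S₂).card ≤ k₂)
    (hCcover : ∀ s ∈ S₁ ∪ S₂, ∃ c ∈ Cstar, dist s c ≤ rstar)
    (hΓ₁sub : Γ₁ ⊆ S₁)
    (hΓ₁cover : ∀ s ∈ S₁, ∃ q ∈ Γ₁, dist s q ≤ 2 * rstar)
    (hΓ₂sub : Γ₂ ⊆ S₂)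
    (hΓ₂sep : ∀ p ∈ Γ₂, ∀ q ∈ Γ₂, p ≠ q → 2 * rstar < dist p q)
    (hΓ₂far : ∀ q ∈ Γ₂, ∀ g ∈ Γ₁, 3 * rstar < dist q g) :
    Γ₂.card ≤ k₂ :=
  semi_structured_gamma2_size_general S₁ S₂ Γ₁ Γ₂ Cstar k₂ rstar hCsub hCfair₂ hCcover hΓ₁cover
    hΓ₂sub hΓ₂sep hΓ₂far
end

section
/- Let (X, d) be a metric space, let S = S₁ ∪ S₂ be a finite subset of X with S₁ and S₂ disjoint, let k₁ ∈ ℕ, let r* ≥ 0, and suppose there exists C* ⊆ S with |C* ∩ S₁| ≤ k₁ and d(s, C*) ≤ r* for every s ∈ S. Let Γ ⊆ S₁ be a set in which any two distinct points are at distance greater than 2·r*. Then there exists a subset Γ'' ⊆ Γ with |Γ \ Γ''| ≤ k₁ such that every point c ∈ Γ'' is within distance r* of some point of C* ∩ S₂ (in particular, within distance r* of some point of S₂). -/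
/-! The points of `Γ` with no center of `C* ∩ S₂` within `r*` have their covering center
in `C* ∩ S₁`, and since `Γ` is `2r*`-separated, no center covers two of them. -/

open Finset

theorem Finset.card_le_card_of_separated_of_forall_exists_dist_le {X : Type*}
    [PseudoMetricSpace X] {A C : Finset X} {r : ℝ}
    (hsep : ∀ p ∈ A, ∀ q ∈ A, p ≠ q → 2 * r < dist p q)
    (hcov : ∀ a ∈ A, ∃ c ∈ C, dist a c ≤ r) : #A ≤ #C := by
  refine card_le_card_of_forall_subsingleton (fun a c => dist a c ≤ r) hcov ?_
  -- a closed `r`-ball contains at most one point of a `2r`-separated set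
  rintro c - p ⟨hp, hpc⟩ q ⟨hq, hqc⟩
  by_contra hpq
  linarith [hsep p hp q hq hpq, dist_triangle_right p q c]

theorem semi_structured_replacement_exists_general
    {X : Type*} [MetricSpace X] [DecidableEq X]
    (S₁ S₂ Γ Cstar : Finset X) (k₁ : ℕ) (rstar : ℝ)
    (hCsub : Cstar ⊆ S₁ ∪ S₂)
    (hCfair₁ : (Cstar ∩ S₁).card ≤ k₁)
    (hCcover : ∀ s ∈ S₁ ∪ S₂, ∃ c ∈ Cstar, dist s c ≤ rstar)
    (hΓsub : Γ ⊆ S₁)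
    (hΓsep : ∀ p ∈ Γ, ∀ q ∈ Γ, p ≠ q → 2 * rstar < dist p q) :
    ∃ Γ'' ⊆ Γ, (Γ \ Γ'').card ≤ k₁ ∧
      ∀ c ∈ Γ'', ∃ p ∈ Cstar ∩ S₂, dist c p ≤ rstar := by
  classical
  let Γ'' := {c ∈ Γ | ∃ p ∈ Cstar ∩ S₂, dist c p ≤ rstar}
  refine ⟨Γ'', filter_subset _ _, ?_, fun c hc => (mem_filter.mp hc).2⟩
  have hcover₁ : ∀ c ∈ Γ \ Γ'', ∃ p ∈ Cstar ∩ S₁, dist c p ≤ rstar := by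
    intro c hc
    obtain ⟨hcΓ, hcΓ''⟩ := mem_sdiff.mp hc
    obtain ⟨p, hpC, hcp⟩ := hCcover c (mem_union_left _ (hΓsub hcΓ))
    rcases mem_union.mp (hCsub hpC) with hp₁ | hp₂
    · exact ⟨p, mem_inter.mpr ⟨hpC, hp₁⟩, hcp⟩
    · exact absurd (mem_filter.mpr ⟨hcΓ, p, mem_inter.mpr ⟨hpC, hp₂⟩, hcp⟩) hcΓ''
  have hsep : ∀ p ∈ Γ \ Γ'', ∀ q ∈ Γ \ Γ'', p ≠ q → 2 * rstar < dist p q :=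
    fun p hp q hq => hΓsep p (mem_sdiff.mp hp).1 q (mem_sdiff.mp hq).1
  calc #(Γ \ Γ'') ≤ #(Cstar ∩ S₁) :=
        card_le_card_of_separated_of_forall_exists_dist_le hsep hcover₁
    _ ≤ k₁ := hCfair₁

/-- Core of Condition (3) of Lemma 5: at most `k₁` points of `Γ` lie in optimal
clusters centered at points of `S₁`; the remaining points `Γ''` admit
replacement points of `C* ∩ S₂` at distance at most `r*`. -/
theorem semi_structured_replacement_exists
    {X : Type*} [MetricSpace X] [DecidableEq X]
    (S₁ S₂ Γ Cstar : Finset X) (k₁ : ℕ) (rstar : ℝ)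
    (hr : 0 ≤ rstar)
    (hdisj : Disjoint S₁ S₂)
    (hCsub : Cstar ⊆ S₁ ∪ S₂)
    (hCfair₁ : (Cstar ∩ S₁).card ≤ k₁)
    (hCcover : ∀ s ∈ S₁ ∪ S₂, ∃ c ∈ Cstar, dist s c ≤ rstar)
    (hΓsub : Γ ⊆ S₁)
    (hΓsep : ∀ p ∈ Γ, ∀ q ∈ Γ, p ≠ q → 2 * rstar < dist p q) :
    ∃ Γ'' ⊆ Γ, (Γ \ Γ'').card ≤ k₁ ∧
      ∀ c ∈ Γ'', ∃ p ∈ Cstar ∩ S₂, dist c p ≤ rstar :=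
  semi_structured_replacement_exists_general S₁ S₂ Γ Cstar k₁ rstar hCsub hCfair₁ hCcover hΓsub
    hΓsep
end

section
/- Let (X, d) be a metric space, let S = S₁ ∪ S₂ be a finite subset of X with S₁ and S₂ disjoint, let k₁ ∈ ℕ, let r* ≥ 0, and suppose there exists C* ⊆ S with |C* ∩ S₁| ≤ k₁ and d(s, C*) ≤ r* for every s ∈ S. Let Γ₁ ⊆ S₁ be a 2r*-independent center set of S₁, and let σ be a function assigning to every point c ∈ Γ₁ that is within distance r* of some point of S₂ a point σ(c) ∈ S₂ with d(c, σ(c)) ≤ r*. Then there exists a subset Γ'' ⊆ Γ₁, consisting of points on which σ is defined, such that the set C₁ = (Γ₁ \ Γ'') ∪ σ(Γ'') satisfies |C₁ ∩ S₁| ≤ k₁ and d(s, C₁) ≤ 3·r* for every s ∈ S₁. -/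
/-!
Take `Γ''` to be the points of `Γ₁` within `r*` of `S₂`. A point of `S₁` is within `2r*` of
some `q ∈ Γ₁`, and replacing `q` by `σ q` costs at most `r*` more. Since `σ` lands in `S₂`,
the points of `C₁` in `S₁` are the untouched points of `Γ₁`, which are farther than `r*` from
`S₂`. Each of them has an optimal center within `r*`, necessarily in `S₁`, and by the
`2r*`-separation of `Γ₁` distinct points get distinct centers, so there are at most `k₁` of
them.
-/

open Finset

section

variable {X : Type*} [PseudoMetricSpace X] {r : ℝ}

theorem Set.Pairwise.injOn_of_dist_le {Γ : Set X} {f : X → X}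
    (hsep : Γ.Pairwise fun p q => 2 * r < dist p q) (hf : ∀ c ∈ Γ, dist c (f c) ≤ r) :
    Γ.InjOn f := by
  intro a ha b hb hab
  by_contra hne
  have : dist a b ≤ 2 * r :=
    calc dist a b ≤ dist a (f a) + dist (f b) b := hab ▸ dist_triangle a (f b) b
      _ ≤ r + r := add_le_add (hf a ha) (dist_comm b (f b) ▸ hf b hb)
      _ = 2 * r := by ring
  exact (hsep ha hb hne).not_ge this

theorem Finset.card_le_card_of_pairwise_dist {Γ C : Finset X}
    (hsep : (Γ : Set X).Pairwise fun p q => 2 * r < dist p q)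
    (hC : ∀ c ∈ Γ, ∃ x ∈ C, dist c x ≤ r) : #Γ ≤ #C := by
  choose! f hfC hfd using hC
  exact card_le_card_of_injOn f hfC (hsep.injOn_of_dist_le hfd)

theorem Finset.card_le_card_inter_left_of_far [DecidableEq X] {S₁ S₂ Γ C : Finset X}
    (hsep : (Γ : Set X).Pairwise fun p q => 2 * r < dist p q) (hCsub : C ⊆ S₁ ∪ S₂)
    (hC : ∀ c ∈ Γ, ∃ x ∈ C, dist c x ≤ r) (hfar : ∀ c ∈ Γ, ∀ p ∈ S₂, r < dist c p) :
    #Γ ≤ #(C ∩ S₁) := by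
  refine card_le_card_of_pairwise_dist hsep fun c hc => ?_
  obtain ⟨x, hxC, hcx⟩ := hC c hc
  have hxS₁ : x ∈ S₁ :=
    (mem_union.1 (hCsub hxC)).resolve_right fun hxS₂ => (hfar c hc x hxS₂).not_ge hcx
  exact ⟨x, mem_inter.2 ⟨hxC, hxS₁⟩, hcx⟩

theorem Finset.exists_mem_sdiff_union_image_dist_le [DecidableEq X] {Γ Γ'' : Finset X}
    {σ : X → X} {r' : ℝ} (hr' : 0 ≤ r') (hσ : ∀ c ∈ Γ'', dist c (σ c) ≤ r') {s q : X}
    (hq : q ∈ Γ) (hsq : dist s q ≤ r) :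
    ∃ c ∈ (Γ \ Γ'') ∪ Γ''.image σ, dist s c ≤ r + r' := by
  by_cases hq'' : q ∈ Γ''
  · exact ⟨σ q, mem_union_right _ (mem_image_of_mem σ hq''),
      (dist_triangle s q (σ q)).trans (add_le_add hsq (hσ q hq''))⟩
  · exact ⟨q, mem_union_left _ (mem_sdiff.2 ⟨hq, hq''⟩), by linarith⟩

end

/-- Condition (3) of Lemma 5 combined with the replacement-covering step of the
3-approximation for semi-structured streams (`m = 2`): excess points of `Γ₁`
can be traded for replacement points in `S₂`, yielding a set `C₁` that covers
`S₁` within radius `3r*` while respecting the group-1 fairness bound. -/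
theorem semi_structured_three_approx_group1
    {X : Type*} [MetricSpace X] [DecidableEq X]
    (S₁ S₂ Γ₁ Cstar : Finset X) (k₁ : ℕ) (rstar : ℝ) (σ : X → X)
    (hr : 0 ≤ rstar)
    (hdisj : Disjoint S₁ S₂)
    (hCsub : Cstar ⊆ S₁ ∪ S₂)
    (hCfair₁ : (Cstar ∩ S₁).card ≤ k₁)
    (hCcover : ∀ s ∈ S₁ ∪ S₂, ∃ c ∈ Cstar, dist s c ≤ rstar)
    -- `Γ₁` is a `2r*`-independent center set of `S₁`
    (hΓsub : Γ₁ ⊆ S₁)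
    (hΓsep : ∀ p ∈ Γ₁, ∀ q ∈ Γ₁, p ≠ q → 2 * rstar < dist p q)
    (hΓcover : ∀ s ∈ S₁, ∃ q ∈ Γ₁, dist s q ≤ 2 * rstar)
    -- `σ` assigns to every point of `Γ₁` within distance `r*` of `S₂`
    -- a point of `S₂` at distance at most `r*`
    (hσ : ∀ c ∈ Γ₁, (∃ p ∈ S₂, dist c p ≤ rstar) →
      σ c ∈ S₂ ∧ dist c (σ c) ≤ rstar) :
    ∃ Γ'' ⊆ Γ₁, (∀ c ∈ Γ'', ∃ p ∈ S₂, dist c p ≤ rstar) ∧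
      (((Γ₁ \ Γ'') ∪ Γ''.image σ) ∩ S₁).card ≤ k₁ ∧
      ∀ s ∈ S₁, ∃ c ∈ (Γ₁ \ Γ'') ∪ Γ''.image σ, dist s c ≤ 3 * rstar := by
  classical
  set Γ'' := Γ₁.filter fun c => ∃ p ∈ S₂, dist c p ≤ rstar
  have hσ'' : ∀ c ∈ Γ'', σ c ∈ S₂ ∧ dist c (σ c) ≤ rstar := fun c hc =>
    hσ c (mem_filter.1 hc).1 (mem_filter.1 hc).2
  have hkept : ((Γ₁ \ Γ'') ∪ Γ''.image σ) ∩ S₁ ⊆ Γ₁ \ Γ'' := by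
    intro x hx
    obtain ⟨hx, hxS₁⟩ := mem_inter.1 hx
    rcases mem_union.1 hx with hx | hx
    · exact hx
    · obtain ⟨c, hc, rfl⟩ := mem_image.1 hx
      exact absurd (hσ'' c hc).1 (disjoint_left.1 hdisj hxS₁)
  have hfar : ∀ c ∈ Γ₁ \ Γ'', ∀ p ∈ S₂, rstar < dist c p := fun c hc p hp =>
    not_le.1 fun hcp => (mem_sdiff.1 hc).2 (mem_filter.2 ⟨(mem_sdiff.1 hc).1, p, hp, hcp⟩)
  refine ⟨Γ'', filter_subset _ _, fun c hc => (mem_filter.1 hc).2, ?_, fun s hs => ?_⟩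
  · refine (card_le_card hkept).trans
      ((card_le_card_inter_left_of_far ?_ hCsub ?_ hfar).trans hCfair₁)
    · exact fun p hp q hq => hΓsep p (mem_sdiff.1 hp).1 q (mem_sdiff.1 hq).1
    · exact fun c hc => hCcover c (mem_union_left _ (hΓsub (mem_sdiff.1 hc).1))
  · obtain ⟨q, hq, hsq⟩ := hΓcover s hs
    obtain ⟨c, hc, hsc⟩ :=
      exists_mem_sdiff_union_image_dist_le hr (fun c hc => (hσ'' c hc).2) hq hsq
    exact ⟨c, hc, by linarith⟩
end
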